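/- Let φ be any B(⟨r⟩,k) formula, M = (W,R) a Kripke frame, w ∈ W, S ⊆ W, N a finite set of nominals, and g an assignment of nominals to states such that {g(i) : i ∈ N} = S. Then M, S, w ⊨ φ in the memory semantics if and only if M, g, w ⊨ Tr_N(φ) in the hybrid H(↓) semantics. -/

import Mathlib

/-- Formulas of the memory logic B(⟨r⟩,k):  F ::= k | ¬F | F ∧ F | ◇F. -/
inductive MForm : Type
  | known : MForm
  | neg : MForm → MForm
  | conj : MForm → MForm → MForm
  | dia : MForm → MForm
deriving DecidableEq

namespace MForm

def disj (φ ψ : MForm) : MForm := neg (conj (neg φ) (neg ψ))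
def impl (φ ψ : MForm) : MForm := neg (conj φ (neg ψ))
def box (φ : MForm) : MForm := neg (dia (neg φ))
def bot : MForm := conj known (neg known)
def top : MForm := disj known (neg known)

end MForm

/-- Satisfaction for B(⟨r⟩,k) on a Kripke frame (W, R), at state `w`, with memory `S`.
`◇` is the remember-and-move operator: the current state is added to the memory. -/
def MSat {W : Type*} (R : W → W → Prop) : Set W → W → MForm → Prop
  | S, w, .known => w ∈ S
  | S, w, .neg φ => ¬ MSat R S w φ
  | S, w, .conj φ ψ => MSat R S w φ ∧ MSat R S w ψ
  | S, w, .dia φ => ∃ t, R w t ∧ MSat R (S ∪ {w}) t φ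

/-- A formula is satisfiable iff it holds at some state of some frame with empty initial memory. -/
def MSatisfiable (φ : MForm) : Prop :=
  ∃ (W : Type) (R : W → W → Prop) (s : W), MSat R ∅ s φ

namespace MForm

/-- The macro s ≡ ◇□⊥ : "the current state sees a dead end". -/
def sees : MForm := dia (box bot)

/-- a-or-b ≡ k ∧ ◇(k ∧ ¬s). -/
def aorb : MForm := conj known (dia (conj known (neg sees)))

/-- c ≡ k ∧ □(k → s). -/
def cmac : MForm := conj known (box (impl known sees))

/-- The formula `Inf`, the conjunction of the seven conjuncts (1)–(7). -/
def infF : MForm :=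
  conj sees <|                                                              -- (1) s
  conj (box (neg sees)) <|                                                  -- (2) □¬s
  conj (box (box (impl known sees))) <|                                     -- (3) □□(k → s)
  conj (dia (dia known)) <|                                                 -- (4) ◇◇k
  conj (box (impl (dia top) (dia (conj (neg known) (neg sees))))) <|        -- (5)
  conj (box (box (impl (neg sees)
        (dia (conj known (conj sees (dia (conj known (box (impl known sees)))))))))) <|  -- (6)
  box (box (impl (neg sees) (box (impl (neg sees)
        (dia (conj known (conj sees (box (impl aorb (dia cmac))))))))))     -- (7)

end MForm

/-- A state `x` "sees a dead end": some successor of `x` has no successor. -/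
def seesDeadEnd {W : Type*} (R : W → W → Prop) (x : W) : Prop :=
  ∃ y, R x y ∧ ∀ z, ¬ R y z

/-- Formulas of the hybrid logic H(↓), over a countably infinite set of nominals
(here ℕ), with no propositional symbols beyond nominals and a single relation:
ψ ::= i | ¬ψ | ψ ∧ ψ | ◇ψ | ↓i.ψ. -/
inductive HForm : Type
  | nom : ℕ → HForm
  | neg : HForm → HForm
  | conj : HForm → HForm → HForm
  | dia : HForm → HForm
  | bind : ℕ → HForm → HForm
deriving DecidableEq

/-- Satisfaction for H(↓) on a Kripke frame (W, R), with assignment `g` of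
nominals to states, at state `w`. -/
def HSat {W : Type*} (R : W → W → Prop) : (ℕ → W) → W → HForm → Prop
  | g, w, .nom i => g i = w
  | g, w, .neg ψ => ¬ HSat R g w ψ
  | g, w, .conj ψ χ => HSat R g w ψ ∧ HSat R g w χ
  | g, w, .dia ψ => ∃ t, R w t ∧ HSat R g t ψ
  | g, w, .bind i ψ => HSat R (Function.update g i w) w ψ

namespace HForm

/-- A hybrid contradiction ⊥. -/
def botH : HForm := conj (nom 0) (neg (nom 0))

/-- Finite disjunction of hybrid formulas (the empty disjunction being ⊥). -/
def bigDisjH : List HForm → HForm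
  | [] => botH
  | ψ :: l => neg (conj (neg ψ) (neg (bigDisjH l)))

end HForm

/-- A fixed choice of a fresh nominal not in the finite set `N`. -/
def freshNom (N : Finset ℕ) : ℕ := (N.sup id) + 1

theorem freshNom_not_mem (N : Finset ℕ) : freshNom N ∉ N := fun h =>
  Nat.not_succ_le_self (N.sup id) (Finset.le_sup (f := id) h)

/-- The translation Tr_N from B(⟨r⟩,k) formulas to H(↓) formulas:
Tr_N(k) = ⋁_{i∈N} i,  Tr commutes with ¬ and ∧,  and
Tr_N(◇φ) = ↓i.◇Tr_{N∪{i}}(φ) for a fixed fresh nominal i ∉ N. -/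
def Tr (N : Finset ℕ) : MForm → HForm
  | .known => HForm.bigDisjH ((N.sort (· ≤ ·)).map HForm.nom)
  | .neg φ => .neg (Tr N φ)
  | .conj φ ψ => .conj (Tr N φ) (Tr N ψ)
  | .dia φ => .bind (freshNom N) (.dia (Tr (insert (freshNom N) N) φ))

theorem hsat_bigDisjH_iff {W : Type*} (R : W → W → Prop) (g : ℕ → W) (w : W) (L : List HForm) :
    HSat R g w (HForm.bigDisjH L) ↔ ∃ ψ ∈ L, HSat R g w ψ := by
  induction L with
  | nil => simp [HForm.bigDisjH, HSat, HForm.botH]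
  | cons ψ l ih =>
    simp only [HForm.bigDisjH, HSat, ih, List.mem_cons, exists_eq_or_imp, not_and_or, not_not]

theorem hsat_tr_known_iff {W : Type*} (R : W → W → Prop) (g : ℕ → W) (w : W) (N : Finset ℕ) :
    HSat R g w (Tr N .known) ↔ w ∈ g '' ↑N := by
  simp [Tr, hsat_bigDisjH_iff, HSat]

theorem Function.update_image_insert_of_notMem {α β : Type*} [DecidableEq α] (g : α → β)
    {i : α} {s : Set α} (hi : i ∉ s) (b : β) :
    Function.update g i b '' insert i s = insert b (g '' s) := by
  rw [Set.image_insert_eq, Function.update_self]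
  congr 1
  exact Set.image_congr fun j hj => Function.update_of_ne (ne_of_mem_of_not_mem hj hi) b g

/-- for any B(⟨r⟩,k) formula φ, Kripke frame (W,R), state w, memory S,
finite set N of nominals and assignment g with {g(i) : i ∈ N} = S, memory satisfaction
of φ coincides with hybrid satisfaction of its translation Tr_N(φ). -/
theorem msat_iff_hsat_tr {W : Type*} (φ : MForm) (R : W → W → Prop) (w : W)
    (S : Set W) (N : Finset ℕ) (g : ℕ → W) (hgS : g '' ↑N = S) :
    MSat R S w φ ↔ HSat R g w (Tr N φ) := by
  subst hgS
  induction φ generalizing w N g with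
  | known => exact (hsat_tr_known_iff R g w N).symm
  | neg φ ih => exact not_congr (ih w N g)
  | conj φ ψ ih₁ ih₂ => exact and_congr (ih₁ w N g) (ih₂ w N g)
  | dia φ ih =>
    -- the fresh nominal bound at `w` extends the memory `g '' N` by exactly `w`
    have hmem : g '' ↑N ∪ {w} = Function.update g (freshNom N) w '' ↑(insert (freshNom N) N) := by
      rw [Finset.coe_insert, Function.update_image_insert_of_notMem g (freshNom_not_mem N),
        Set.union_singleton]
    simp only [MSat, Tr, HSat, hmem]
    exact exists_congr fun t => and_congr_right fun _ => ih t _ _
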